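/- Let u = (u_1,…,u_l) ∈ ∏_{j=1}^l ℂ^{k_j} with u_l ≠ 0 and 0 < |η| < π, and set (z,t) = Ψ(u,η). Then: (i) |z_j|² = (2 − 2cos(2a_jη))|u_j|² for each 1 ≤ j ≤ l; (ii) z_l ≠ 0 and the unique θ = θ(z,t) ∈ (−π,π) solving t = Σ_{j=1}^l a_j μ(a_jθ)|z_j|² equals η; (iii) d²(z,t) = Σ_{j=1}^l (a_jθ/sin(a_jθ))²|z_j|² = 4Σ_{j=1}^l a_j²|u_j|² η² = U²η². -/

import Mathlib

open MeasureTheory Real Complex Finset Filter Topology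

noncomputable section

/-- The underlying space of the nonisotropic Heisenberg group `ℍ(𝒦,𝒜)`, where the number of
blocks is `l + 1`, the block dimensions are `k 0, …, k l` and the parameters are
`a 0 < ⋯ < a l`. A point is a pair `(z, t)` with `z i : Fin (k i) → ℂ` and `t : ℝ`. -/
abbrev Heis (l : ℕ) (k : Fin (l + 1) → ℕ) : Type :=
  ((i : Fin (l + 1)) → (Fin (k i) → ℂ)) × ℝ

variable (l : ℕ) (k : Fin (l + 1) → ℕ) (a : Fin (l + 1) → ℝ)

/-- The group multiplication of `ℍ(𝒦,𝒜)`: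
`(z,t)·(z′,t′) = (z + z′, t + t′ + 2 ∑ᵢ aᵢ Im⟨zᵢ, zᵢ′⟩)`. -/
def hmul (g g' : Heis l k) : Heis l k :=
  (g.1 + g'.1,
    g.2 + g'.2 + 2 * ∑ i, a i * (∑ j, (starRingEnd ℂ) (g.1 i j) * g'.1 i j).im)

/-- The group inversion of `ℍ(𝒦,𝒜)`: `(z,t)⁻¹ = (-z,-t)`. -/
def hinv (g : Heis l k) : Heis l k := (-g.1, -g.2)

/-- `|z i|²`, the squared Euclidean norm of the `i`-th block of `z`. -/
def zNormSq (z : (i : Fin (l + 1)) → Fin (k i) → ℂ) (i : Fin (l + 1)) : ℝ :=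
  ∑ j, Complex.normSq (z i j)

/-- The left-invariant vector field `X_{i,j} = ∂_{x_{i,j}} + 2 aᵢ y_{i,j} ∂_t`, applied to a
function `f` at a point `g`, realized as a directional (line) derivative. -/
def Xvf (i : Fin (l + 1)) (j : Fin (k i)) (f : Heis l k → ℝ) (g : Heis l k) : ℝ :=
  lineDeriv ℝ f g (Pi.single i (Pi.single j (1 : ℂ)), 2 * a i * (g.1 i j).im)

/-- The left-invariant vector field `Y_{i,j} = ∂_{y_{i,j}} - 2 aᵢ x_{i,j} ∂_t`. -/
def Yvf (i : Fin (l + 1)) (j : Fin (k i)) (f : Heis l k → ℝ) (g : Heis l k) : ℝ :=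
  lineDeriv ℝ f g (Pi.single i (Pi.single j (Complex.I)), -(2 * a i * (g.1 i j).re))

/-- The right-invariant vector field `X̂_{i,j} = ∂_{x_{i,j}} - 2 aᵢ y_{i,j} ∂_t`. -/
def XvfR (i : Fin (l + 1)) (j : Fin (k i)) (f : Heis l k → ℝ) (g : Heis l k) : ℝ :=
  lineDeriv ℝ f g (Pi.single i (Pi.single j (1 : ℂ)), -(2 * a i * (g.1 i j).im))

/-- The right-invariant vector field `Ŷ_{i,j} = ∂_{y_{i,j}} + 2 aᵢ x_{i,j} ∂_t`. -/
def YvfR (i : Fin (l + 1)) (j : Fin (k i)) (f : Heis l k → ℝ) (g : Heis l k) : ℝ :=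
  lineDeriv ℝ f g (Pi.single i (Pi.single j (Complex.I)), 2 * a i * (g.1 i j).re)

/-- `|∇f|(g)`, the Euclidean length of the horizontal (left-invariant) gradient of `f` at `g`. -/
def gradNorm (f : Heis l k → ℝ) (g : Heis l k) : ℝ :=
  Real.sqrt (∑ i, ∑ j, ((Xvf l k a i j f g) ^ 2 + (Yvf l k a i j f g) ^ 2))

/-- The heat kernel `p_h(z,t)` at time `h` of `ℍ(𝒦,𝒜)`, as a complex integral:
`p_h(z,t) = (2(4πh)^{n+1})⁻¹ ∫_ℝ ∏ⱼ (aⱼλ/sinh(aⱼλ))^{kⱼ}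
  exp((4h)⁻¹(iλt − ∑ⱼ |zⱼ|² aⱼλ coth(aⱼλ))) dλ`. -/
def heatKernelC (h : ℝ) (g : Heis l k) : ℂ :=
  (2 * (4 * Real.pi * h) ^ ((∑ i, k i) + 1) : ℂ)⁻¹ *
    ∫ lam : ℝ,
      ((∏ j, ((a j * lam) / Real.sinh (a j * lam)) ^ (k j) : ℝ) : ℂ) *
        Complex.exp ((4 * (h : ℂ))⁻¹ *
          (Complex.I * (lam : ℂ) * (g.2 : ℂ) -
            ∑ j, ((zNormSq l k g.1 j : ℝ) : ℂ) *
              ((a j * lam * (Real.cosh (a j * lam) / Real.sinh (a j * lam)) : ℝ) : ℂ)))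

/-- The (real-valued) heat kernel `p_h` of `ℍ(𝒦,𝒜)`. -/
def heatKernel (h : ℝ) (g : Heis l k) : ℝ := (heatKernelC l k a h g).re

/-- The heat semigroup: `e^{hΔ} f (g) = ∫_ℍ f(g·g′) p_h(g′) dm(g′)`, with `m` the Lebesgue
(Haar) measure on `ℍ(𝒦,𝒜)`. -/
def heatSemigroup (h : ℝ) (f : Heis l k → ℝ) (g : Heis l k) : ℝ :=
  ∫ g' : Heis l k, f (hmul l k a g g') * heatKernel l k a h g'

/-- `μ(ω) = (2ω − sin 2ω)/(2 sin²ω)`; note that at `ω = 0` Lean's convention `0/0 = 0`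
gives exactly the continuous extension `μ(0) = 0`. -/
def muF (ω : ℝ) : ℝ := (2 * ω - Real.sin (2 * ω)) / (2 * Real.sin ω ^ 2)


lemma sin_sub_mul_cos_pos {x : ℝ} (hx : 0 < x) (hxπ : x < Real.pi) :
    0 < Real.sin x - x * Real.cos x := by
  rcases le_or_gt (Real.cos x) 0 with hc | hc
  · have := Real.sin_pos_of_pos_of_lt_pi hx hxπ
    nlinarith
  · have hx2 : x < Real.pi / 2 := by
      by_contra h
      push_neg at h
      have := Real.cos_nonpos_of_pi_div_two_le_of_le h (by linarith [Real.pi_pos])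
      linarith
    have ht := Real.lt_tan hx hx2
    rw [Real.tan_eq_sin_div_cos] at ht
    have := (lt_div_iff₀ hc).1 ht
    nlinarith

lemma muF_hasDerivAt {x : ℝ} (hs : Real.sin x ≠ 0) :
    HasDerivAt muF (((2 - Real.cos (2*x) * 2) * (2 * Real.sin x ^ 2)
      - (2 * x - Real.sin (2*x)) * (2 * (2 * Real.sin x ^ 1 * Real.cos x)))
      / (2 * Real.sin x ^ 2) ^ 2) x := by
  have hN : HasDerivAt (fun y => 2 * y - Real.sin (2 * y)) (2 - Real.cos (2*x) * 2) x := by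
    have h1 : HasDerivAt (fun y : ℝ => 2 * y) 2 x := by
      simpa using (hasDerivAt_id x).const_mul 2
    have h2 : HasDerivAt (fun y : ℝ => Real.sin (2 * y)) (Real.cos (2*x) * 2) x :=
      (Real.hasDerivAt_sin (2*x)).comp x (by simpa using (hasDerivAt_id x).const_mul 2)
    exact h1.sub h2
  have hD : HasDerivAt (fun y => 2 * Real.sin y ^ 2) (2 * (2 * Real.sin x ^ 1 * Real.cos x)) x :=
    ((Real.hasDerivAt_sin x).pow 2).const_mul 2
  exact hN.div hD (by positivity)

lemma muF_strictMonoOn_pos : StrictMonoOn muF (Set.Ioo 0 Real.pi) := by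
  apply strictMonoOn_of_deriv_pos (convex_Ioo _ _)
  · intro x hx
    exact (muF_hasDerivAt (by
      exact (Real.sin_pos_of_pos_of_lt_pi hx.1 hx.2).ne')).continuousAt.continuousWithinAt
  · rw [interior_Ioo]
    intro x hx
    have hsp : 0 < Real.sin x := Real.sin_pos_of_pos_of_lt_pi hx.1 hx.2
    rw [(muF_hasDerivAt hsp.ne').deriv]
    have h1 := sin_sub_mul_cos_pos hx.1 hx.2
    have hpow : (0:ℝ) < (2 * Real.sin x ^ 2) ^ 2 := by positivity
    apply div_pos _ hpow
    have hc2 : Real.cos (2*x) = 1 - 2 * Real.sin x ^ 2 := by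
      rw [Real.cos_two_mul]; nlinarith [Real.sin_sq_add_cos_sq x]
    have hs2 : Real.sin (2*x) = 2 * Real.sin x * Real.cos x := Real.sin_two_mul x
    rw [hc2, hs2]
    ring_nf
    nlinarith [Real.sin_sq_add_cos_sq x]

lemma muF_odd (x : ℝ) : muF (-x) = - muF x := by
  simp [muF, mul_neg, Real.sin_neg, neg_div]
  ring_nf

lemma muF_zero : muF 0 = 0 := by simp [muF]

lemma muF_pos {x : ℝ} (hx : 0 < x) (hxπ : x < Real.pi) : 0 < muF x := by
  apply div_pos
  · nlinarith [Real.sin_lt (show (0:ℝ) < 2*x by linarith)]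
  · have := Real.sin_pos_of_pos_of_lt_pi hx hxπ
    positivity

lemma muF_strictMonoOn : StrictMonoOn muF (Set.Ioo (-Real.pi) Real.pi) := by
  intro x hx y hy hxy
  rcases lt_trichotomy x 0 with hx0 | hx0 | hx0
  · have hxm : -x ∈ Set.Ioo 0 Real.pi := ⟨by linarith, by linarith [hx.1]⟩
    have hxneg : muF x < 0 := by
      have := muF_pos hxm.1 hxm.2
      have e1 : muF (-x) = -muF x := muF_odd x
      linarith
    rcases lt_trichotomy y 0 with hy0 | hy0 | hy0
    · have hym : -y ∈ Set.Ioo 0 Real.pi := ⟨by linarith, by linarith [hy.1]⟩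
      have h := muF_strictMonoOn_pos hym hxm (by linarith)
      have e1 : muF (-x) = -muF x := muF_odd x
      have e2 : muF (-y) = -muF y := muF_odd y
      linarith
    · rw [hy0, muF_zero]; exact hxneg
    · exact hxneg.trans (muF_pos hy0 hy.2)
  · rw [hx0, muF_zero]
    exact muF_pos (hx0 ▸ hxy) hy.2
  · exact muF_strictMonoOn_pos ⟨hx0, hx.2⟩ ⟨hx0.trans hxy, hy.2⟩ hxy


/-- `x / sin x`, extended continuously by `1` at `x = 0`. -/
def sdiv (x : ℝ) : ℝ := if x = 0 then 1 else x / Real.sin x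

/-- The angle `θ(z,t) ∈ (−π,π)` solving `t = ∑ⱼ aⱼ μ(aⱼθ)|zⱼ|²`, chosen by the epsilon
operator (whenever a solution exists it is unique, and `thetaOf` is that solution). -/
def thetaOf (g : Heis l k) : ℝ :=
  Classical.epsilon fun θ : ℝ => θ ∈ Set.Ioo (-Real.pi) Real.pi ∧
    g.2 = ∑ j, a j * muF (a j * θ) * zNormSq l k g.1 j

/-- The squared Carnot–Carathéodory distance from `g = (z,t)` to the origin:
if `z_l ≠ 0`, or `z_l = 0` and `|t| < ∑_{j<l} aⱼ μ(aⱼπ)|zⱼ|²`, it is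
`∑ⱼ (aⱼθ/sin(aⱼθ))² |zⱼ|²` with `θ = θ(z,t)`; otherwise it is
`π(|t| + ∑_{j<l} aⱼ cot(aⱼπ)|zⱼ|²)`. -/
def ccDistSq (g : Heis l k) : ℝ :=
  if g.1 (Fin.last l) ≠ 0 ∨
      |g.2| < ∑ j ∈ Finset.univ.erase (Fin.last l),
        a j * muF (a j * Real.pi) * zNormSq l k g.1 j then
    ∑ j, (sdiv (a j * thetaOf l k a g)) ^ 2 * zNormSq l k g.1 j
  else
    Real.pi * (|g.2| + ∑ j ∈ Finset.univ.erase (Fin.last l),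
      a j * (Real.cos (a j * Real.pi) / Real.sin (a j * Real.pi)) * zNormSq l k g.1 j)

/-- The Carnot–Carathéodory distance from `g` to the origin. -/
def ccDist (g : Heis l k) : ℝ := Real.sqrt (ccDistSq l k a g)

/-- The Carnot–Carathéodory unit ball `B` of `ℍ(𝒦,𝒜)`. -/
def ballCC : Set (Heis l k) := {g | ccDist l k a g < 1}

/-- `m_f`, the mean of `f` over the Carnot–Carathéodory unit ball. -/
def meanB (f : Heis l k → ℝ) : ℝ :=
  (∫ g in ballCC l k a, f g) / (volume (ballCC l k a)).toReal

/-- The polar coordinates map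
`Ψ(u,η) = ((1−e^{−2ia₁η})u₁, …, (1−e^{−2ia_lη})u_l, ∑ⱼ 2aⱼ|uⱼ|²(2aⱼη − sin(2aⱼη)))`. -/
def Psi (u : (i : Fin (l + 1)) → Fin (k i) → ℂ) (η : ℝ) : Heis l k :=
  (fun i => fun j => (1 - Complex.exp (-(2 * Complex.I * (a i : ℂ) * (η : ℂ)))) * u i j,
    ∑ j, 2 * a j * zNormSq l k u j * (2 * a j * η - Real.sin (2 * a j * η)))

/-- `U = (4 ∑ⱼ aⱼ²|uⱼ|²)^{1/2}`. -/
def Ufun (u : (i : Fin (l + 1)) → Fin (k i) → ℂ) : ℝ :=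
  Real.sqrt (4 * ∑ j, (a j) ^ 2 * zNormSq l k u j)

/-- The Jacobian determinant `J(u,η)` of `Ψ` at `(u,η)` (the determinant of the total
derivative of `Ψ` as a map of the real vector space `ℍ ≅ ℝ^{2n+1}`). -/
def jacPsi (u : (i : Fin (l + 1)) → Fin (k i) → ℂ) (η : ℝ) : ℝ :=
  LinearMap.det
    ((fderiv ℝ (fun q : Heis l k => Psi l k a q.1 q.2) (u, η)) : Heis l k →ₗ[ℝ] Heis l k)


/-- Let `u = (u₁,…,u_l)` with `u_l ≠ 0`, `0 < |η| < π`, and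
`(z,t) = Ψ(u,η)`. Then (i) `|zⱼ|² = (2−2cos(2aⱼη))|uⱼ|²` for each `j`; (ii) `z_l ≠ 0` and
the unique `θ = θ(z,t) ∈ (−π,π)` solving `t = ∑ⱼ aⱼ μ(aⱼθ)|zⱼ|²` equals `η`; (iii)
`d²(z,t) = ∑ⱼ (aⱼθ/sin(aⱼθ))²|zⱼ|² = 4∑ⱼ aⱼ²|uⱼ|²η² = U²η²`. -/

theorem statement12 (l : ℕ) (k : Fin (l + 1) → ℕ) (hk : ∀ i, 0 < k i)
    (a : Fin (l + 1) → ℝ) (ha0 : 0 < a 0) (haMono : StrictMono a)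
    (haLast : a (Fin.last l) = 1)
    (u : (i : Fin (l + 1)) → Fin (k i) → ℂ) (hu : u (Fin.last l) ≠ 0)
    (η : ℝ) (hη0 : 0 < |η|) (hηπ : |η| < Real.pi) :
    -- (i)
    (∀ i, zNormSq l k (Psi l k a u η).1 i =
        (2 - 2 * Real.cos (2 * a i * η)) * zNormSq l k u i) ∧
    -- (ii): `z_l ≠ 0`, `θ = η` solves the equation, and it is the unique solution in `(−π,π)`
    (Psi l k a u η).1 (Fin.last l) ≠ 0 ∧
    (Psi l k a u η).2 = ∑ j, a j * muF (a j * η) * zNormSq l k (Psi l k a u η).1 j ∧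
    (∀ θ ∈ Set.Ioo (-Real.pi) Real.pi,
        (Psi l k a u η).2 = ∑ j, a j * muF (a j * θ) * zNormSq l k (Psi l k a u η).1 j →
        θ = η) ∧
    -- (iii)
    ccDistSq l k a (Psi l k a u η) =
      ∑ j, (a j * η / Real.sin (a j * η)) ^ 2 * zNormSq l k (Psi l k a u η).1 j ∧
    (∑ j, (a j * η / Real.sin (a j * η)) ^ 2 * zNormSq l k (Psi l k a u η).1 j) =
      4 * (∑ j, (a j) ^ 2 * zNormSq l k u j) * η ^ 2 ∧
    4 * (∑ j, (a j) ^ 2 * zNormSq l k u j) * η ^ 2 = (Ufun l k a u) ^ 2 * η ^ 2 := by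
  have ha_pos : ∀ j, 0 < a j := fun j => lt_of_lt_of_le ha0 (haMono.monotone (Fin.zero_le j))
  have ha_le1 : ∀ j, a j ≤ 1 := fun j => haLast ▸ haMono.monotone (Fin.le_last j)
  have hηne : η ≠ 0 := fun h => by simp [h] at hη0
  have hηIoo : η ∈ Set.Ioo (-Real.pi) Real.pi := Set.mem_Ioo.2 (abs_lt.1 hηπ)
  have hmem : ∀ x ∈ Set.Ioo (-Real.pi) Real.pi, ∀ j,
      a j * x ∈ Set.Ioo (-Real.pi) Real.pi := by
    intro x hx j
    have hax : |x| < Real.pi := abs_lt.2 ⟨hx.1, hx.2⟩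
    have : |a j * x| < Real.pi := by
      rw [abs_mul, abs_of_pos (ha_pos j)]
      calc a j * |x| ≤ 1 * |x| := by
            exact mul_le_mul_of_nonneg_right (ha_le1 j) (abs_nonneg x)
        _ < Real.pi := by rw [one_mul]; exact hax
    exact Set.mem_Ioo.2 (abs_lt.1 this)
  have hsin_ne : ∀ j, Real.sin (a j * η) ≠ 0 := by
    intro j
    have hm := hmem η hηIoo j
    simp only [ne_eq, Real.sin_eq_zero_iff_of_lt_of_lt hm.1 hm.2]
    exact mul_ne_zero (ha_pos j).ne' hηne
  -- (i)
  have hnormc : ∀ j : Fin (l + 1),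
      Complex.normSq (1 - Complex.exp (-(2 * Complex.I * (a j : ℂ) * (η : ℂ)))) =
        2 - 2 * Real.cos (2 * a j * η) := by
    intro j
    have h1 : -(2 * Complex.I * (a j : ℂ) * (η : ℂ)) = ((-(2 * a j * η) : ℝ) : ℂ) * Complex.I := by
      push_cast; ring
    rw [h1, Complex.normSq_apply]
    simp only [Complex.sub_re, Complex.sub_im, Complex.one_re, Complex.one_im,
      Complex.exp_ofReal_mul_I_re, Complex.exp_ofReal_mul_I_im, Real.cos_neg, Real.sin_neg]
    nlinarith [Real.sin_sq_add_cos_sq (2 * a j * η)]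
  have hi : ∀ i, zNormSq l k (Psi l k a u η).1 i =
      (2 - 2 * Real.cos (2 * a i * η)) * zNormSq l k u i := by
    intro i
    simp only [zNormSq, Psi, Complex.normSq_mul]
    rw [← Finset.mul_sum, hnormc i]
  have hfour : ∀ j, 2 - 2 * Real.cos (2 * a j * η) = 4 * Real.sin (a j * η) ^ 2 := by
    intro j
    have h2 : Real.cos (2 * a j * η) = Real.cos (2 * (a j * η)) := by ring_nf
    rw [h2, Real.cos_two_mul]
    nlinarith [Real.sin_sq_add_cos_sq (a j * η)]
  have huln : 0 < zNormSq l k u (Fin.last l) := by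
    obtain ⟨j0, hj0⟩ := Function.ne_iff.1 hu
    exact Finset.sum_pos' (fun j _ => Complex.normSq_nonneg _)
      ⟨j0, Finset.mem_univ _, Complex.normSq_pos.2 hj0⟩
  have hcpos_last : 0 < zNormSq l k (Psi l k a u η).1 (Fin.last l) := by
    rw [hi, hfour]
    have hs2 : 0 < Real.sin (a (Fin.last l) * η) ^ 2 :=
      lt_of_le_of_ne (sq_nonneg _) (Ne.symm (pow_ne_zero 2 (hsin_ne (Fin.last l))))
    nlinarith
  have hzl : (Psi l k a u η).1 (Fin.last l) ≠ 0 := by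
    intro h
    have h0 : zNormSq l k (Psi l k a u η).1 (Fin.last l) = 0 := by
      simp [zNormSq, h]
    linarith
  -- t equation
  have hterm : ∀ j : Fin (l + 1), a j * muF (a j * η) * zNormSq l k (Psi l k a u η).1 j =
      2 * a j * zNormSq l k u j * (2 * a j * η - Real.sin (2 * a j * η)) := by
    intro j
    rw [hi j, hfour j, muF]
    have hs := hsin_ne j
    have h2 : Real.sin (2 * (a j * η)) = Real.sin (2 * a j * η) := by ring_nf
    rw [h2]
    field_simp
    ring
  have hteq : (Psi l k a u η).2 =
      ∑ j, a j * muF (a j * η) * zNormSq l k (Psi l k a u η).1 j := by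
    rw [Finset.sum_congr rfl fun j _ => hterm j]
    rfl
  -- uniqueness
  have hznn : ∀ i, 0 ≤ zNormSq l k (Psi l k a u η).1 i := fun i =>
    Finset.sum_nonneg fun _ _ => Complex.normSq_nonneg _
  have key : ∀ x ∈ Set.Ioo (-Real.pi) Real.pi, ∀ y ∈ Set.Ioo (-Real.pi) Real.pi, x < y →
      (∑ j, a j * muF (a j * x) * zNormSq l k (Psi l k a u η).1 j) <
        ∑ j, a j * muF (a j * y) * zNormSq l k (Psi l k a u η).1 j := by
    intro x hx y hy hxy
    apply Finset.sum_lt_sum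
    · intro i _
      have hlt : muF (a i * x) < muF (a i * y) :=
        muF_strictMonoOn (hmem x hx i) (hmem y hy i) ((mul_lt_mul_iff_right₀ (ha_pos i)).2 hxy)
      exact mul_le_mul_of_nonneg_right
        (mul_le_mul_of_nonneg_left hlt.le (ha_pos i).le) (hznn i)
    · refine ⟨Fin.last l, Finset.mem_univ _, ?_⟩
      have hlt : muF (a (Fin.last l) * x) < muF (a (Fin.last l) * y) :=
        muF_strictMonoOn (hmem x hx _) (hmem y hy _) ((mul_lt_mul_iff_right₀ (ha_pos _)).2 hxy)
      exact mul_lt_mul_of_pos_right (mul_lt_mul_of_pos_left hlt (ha_pos _)) hcpos_last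
  have huniq : ∀ θ ∈ Set.Ioo (-Real.pi) Real.pi,
      (Psi l k a u η).2 = ∑ j, a j * muF (a j * θ) * zNormSq l k (Psi l k a u η).1 j →
      θ = η := by
    intro θ hθ hEq
    by_contra hne
    rcases lt_or_gt_of_ne hne with h | h
    · have hlt := key θ hθ η hηIoo h
      rw [← hEq, ← hteq] at hlt
      exact lt_irrefl _ hlt
    · have hlt := key η hηIoo θ hθ h
      rw [← hEq, ← hteq] at hlt
      exact lt_irrefl _ hlt
  have hθη : thetaOf l k a (Psi l k a u η) = η := by
    have hspec := Classical.epsilon_spec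
      (⟨η, hηIoo, hteq⟩ : ∃ θ : ℝ, θ ∈ Set.Ioo (-Real.pi) Real.pi ∧
        (Psi l k a u η).2 = ∑ j, a j * muF (a j * θ) * zNormSq l k (Psi l k a u η).1 j)
    exact huniq _ hspec.1 hspec.2
  have hcc : ccDistSq l k a (Psi l k a u η) =
      ∑ j, (a j * η / Real.sin (a j * η)) ^ 2 * zNormSq l k (Psi l k a u η).1 j := by
    rw [ccDistSq, if_pos (Or.inl hzl), hθη]
    exact Finset.sum_congr rfl fun j _ => by
      rw [sdiv, if_neg (mul_ne_zero (ha_pos j).ne' hηne)]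
  have hsum : (∑ j, (a j * η / Real.sin (a j * η)) ^ 2 * zNormSq l k (Psi l k a u η).1 j) =
      4 * (∑ j, (a j) ^ 2 * zNormSq l k u j) * η ^ 2 := by
    have hj : ∀ j : Fin (l + 1), (a j * η / Real.sin (a j * η)) ^ 2 *
        zNormSq l k (Psi l k a u η).1 j = 4 * ((a j) ^ 2 * zNormSq l k u j) * η ^ 2 := by
      intro j
      rw [hi j, hfour j]
      have hs := hsin_ne j
      field_simp
    rw [Finset.sum_congr rfl fun j _ => hj j, Finset.mul_sum, Finset.sum_mul]
  have hU : 4 * (∑ j, (a j) ^ 2 * zNormSq l k u j) * η ^ 2 = (Ufun l k a u) ^ 2 * η ^ 2 := by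
    have h4 : 0 ≤ 4 * ∑ j, (a j) ^ 2 * zNormSq l k u j :=
      mul_nonneg (by norm_num) (Finset.sum_nonneg fun j _ =>
        mul_nonneg (sq_nonneg _) (Finset.sum_nonneg fun _ _ => Complex.normSq_nonneg _))
    rw [Ufun, Real.sq_sqrt h4]
  exact ⟨hi, hzl, hteq, huniq, hcc, hsum, hU⟩

end
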